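/- arXiv:0711.2366 — 4 statements merged into one kernel-verified Lean document; each statement's English description precedes it below -/
import Mathlib

section
/- Let λ₁,…,λₙ be real numbers with λᵢ ≥ ε·H for all i, where H = Σᵢ λᵢ > 0 and ε ∈ (0, 1/n]. Setting |A|² = Σᵢ λᵢ² and tr(A³) = Σᵢ λᵢ³, one has H·tr(A³) − |A|⁴ ≥ n·ε²·H²·(|A|² − H²/n). -/
/-! The double sum `∑ᵢ ∑ⱼ λᵢ λⱼ (λᵢ - λⱼ)²` equals `2 (H tr(A³) - |A|⁴)`, while
`∑ᵢ ∑ⱼ (λᵢ - λⱼ)²` equals `2 (n |A|² - H²)`. Pinching gives `λᵢ λⱼ ≥ (εH)²` termwise,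
so comparing the two double sums proves the inequality. -/

open Finset

section DoubleSums

variable {ι : Type*} [Fintype ι] (x : ι → ℝ)

theorem sum_sum_mul_mul_sub_sq :
    ∑ i, ∑ j, x i * x j * (x i - x j) ^ 2
      = 2 * ((∑ i, x i) * ∑ i, x i ^ 3 - (∑ i, x i ^ 2) ^ 2) := by
  have expand : ∀ i j, x i * x j * (x i - x j) ^ 2
      = x i ^ 3 * x j - 2 * (x i ^ 2 * x j ^ 2) + x i * x j ^ 3 := fun _ _ => by ring
  simp only [expand, sum_add_distrib, sum_sub_distrib, ← mul_sum, ← sum_mul]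
  ring

theorem sum_sum_sub_sq :
    ∑ i, ∑ j, (x i - x j) ^ 2
      = 2 * (Fintype.card ι * ∑ i, x i ^ 2 - (∑ i, x i) ^ 2) := by
  have expand : ∀ i j, (x i - x j) ^ 2
      = x i ^ 2 - 2 * (x i * x j) + x j ^ 2 := fun _ _ => by ring
  simp only [expand, sum_add_distrib, sum_sub_distrib, ← mul_sum, ← sum_mul, sum_const,
    card_univ, nsmul_eq_mul]
  ring

theorem sq_mul_card_mul_sum_sq_sub_le {c : ℝ} (hc : 0 ≤ c) (hx : ∀ i, c ≤ x i) :
    c ^ 2 * (Fintype.card ι * ∑ i, x i ^ 2 - (∑ i, x i) ^ 2)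
      ≤ (∑ i, x i) * ∑ i, x i ^ 3 - (∑ i, x i ^ 2) ^ 2 := by
  have termwise : ∀ i j, c ^ 2 * (x i - x j) ^ 2 ≤ x i * x j * (x i - x j) ^ 2 := by
    intro i j
    refine mul_le_mul_of_nonneg_right ?_ (sq_nonneg _)
    rw [sq]
    exact mul_le_mul (hx i) (hx j) hc (hc.trans (hx i))
  have summed := sum_le_sum fun i (_ : i ∈ univ) => sum_le_sum fun j (_ : j ∈ univ) => termwise i j
  simp only [← mul_sum, sum_sum_sub_sq, sum_sum_mul_mul_sub_sq] at summed
  linarith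

end DoubleSums

theorem stmt2_general (n : ℕ) (ε : ℝ) (lam : Fin n → ℝ)
    (hε : 0 < ε)
    (hH : 0 < ∑ i, lam i)
    (hpinch : ∀ i, ε * (∑ j, lam j) ≤ lam i) :
    n * ε ^ 2 * (∑ i, lam i) ^ 2 * ((∑ i, (lam i) ^ 2) - (∑ i, lam i) ^ 2 / n)
      ≤ (∑ i, lam i) * (∑ i, (lam i) ^ 3) - (∑ i, (lam i) ^ 2) ^ 2 := by
  have hn : (n : ℝ) ≠ 0 := by
    rintro hn
    obtain rfl : n = 0 := by exact_mod_cast hn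
    simp at hH
  have bound := sq_mul_card_mul_sum_sq_sub_le lam (by positivity) hpinch
  rw [Fintype.card_fin] at bound
  calc _ = (ε * ∑ i, lam i) ^ 2 * (n * ∑ i, lam i ^ 2 - (∑ i, lam i) ^ 2) := by
        field_simp
    _ ≤ _ := bound

/-- Pinching inequality (Lemma 3(i)): if `lam i ≥ ε·H` for all `i`, with
`H = ∑ lam i > 0` and `ε ∈ (0, 1/n]`, then
`H·tr(A³) − |A|⁴ ≥ n·ε²·H²·(|A|² − H²/n)`. -/
theorem stmt2 (n : ℕ) (ε : ℝ) (lam : Fin n → ℝ)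
    (hε : 0 < ε) (hεn : ε ≤ 1 / n)
    (hH : 0 < ∑ i, lam i)
    (hpinch : ∀ i, ε * (∑ j, lam j) ≤ lam i) :
    n * ε ^ 2 * (∑ i, lam i) ^ 2 * ((∑ i, (lam i) ^ 2) - (∑ i, lam i) ^ 2 / n)
      ≤ (∑ i, lam i) * (∑ i, (lam i) ^ 3) - (∑ i, (lam i) ^ 2) ^ 2 :=
  stmt2_general n ε lam hε hH hpinch
end

section
/- Let h⁺ > 0, n ≥ 1, and suppose r : [T*, T) → ℝ satisfies 0 < r(t) < n/h⁺ and r'(t) ≤ h⁺ − n/r(t) for all t ∈ [T*, T). Then for all t ∈ [T*, T), the inequality r(t) + (n/h⁺)·log(n − h⁺·r(t)) ≥ h⁺·(t − T*) + r(T*) + (n/h⁺)·log(n − h⁺·r(T*)) holds. -/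
/-- Integrated ODE inequality (4.3): if `0 < r < n/h⁺` and `r' ≤ h⁺ − n/r` on
`[T*, T)`, then
`r(t) + (n/h⁺)·log(n − h⁺ r(t)) ≥ h⁺(t − T*) + r(T*) + (n/h⁺)·log(n − h⁺ r(T*))`. -/
theorem stmt8 (n : ℕ) (hn : 1 ≤ n) (hp Tstar T : ℝ)
    (hhp : 0 < hp) (hTT : Tstar < T)
    (r r' : ℝ → ℝ)
    (hpos : ∀ t ∈ Set.Ico Tstar T, 0 < r t)
    (hub : ∀ t ∈ Set.Ico Tstar T, r t < n / hp)
    (hderiv : ∀ t ∈ Set.Ico Tstar T, HasDerivAt r (r' t) t)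
    (hle : ∀ t ∈ Set.Ico Tstar T, r' t ≤ hp - n / r t) :
    ∀ t ∈ Set.Ico Tstar T,
      hp * (t - Tstar) + r Tstar + (n / hp) * Real.log (n - hp * r Tstar)
        ≤ r t + (n / hp) * Real.log (n - hp * r t) := by
  intro t ht
  set F : ℝ → ℝ := fun s => r s + (n / hp) * Real.log (n - hp * r s) - hp * s with hF
  -- derivative of F on Ico
  have key : ∀ s ∈ Set.Ico Tstar T,
      HasDerivAt F (r' s + (n / hp) * ((0 - hp * r' s) / (n - hp * r s)) - hp) s ∧
      0 ≤ r' s + (n / hp) * ((0 - hp * r' s) / (n - hp * r s)) - hp := by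
    intro s hs
    have hrs := hpos s hs
    have hbs : 0 < (n : ℝ) - hp * r s := by
      have h := (lt_div_iff₀ hhp).mp (hub s hs)
      nlinarith
    have h1 := hderiv s hs
    have h2 : HasDerivAt (fun x => (n : ℝ) - hp * r x) (0 - hp * r' s) s :=
      (hasDerivAt_const s (n : ℝ)).sub (h1.const_mul hp)
    have h3 := h2.log (ne_of_gt hbs)
    have h4 := h3.const_mul ((n : ℝ) / hp)
    have h5 : HasDerivAt (fun x => hp * x) hp s := by
      simpa using (hasDerivAt_id s).const_mul hp
    refine ⟨(h1.add h4).sub h5, ?_⟩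
    have hle' := hle s hs
    -- r' s ≤ hp - n / r s = -(n - hp r s)/r s
    have hineq : r' s * r s ≤ hp * r s - n := by
      have := mul_le_mul_of_nonneg_right hle' (le_of_lt hrs)
      calc r' s * r s ≤ (hp - n / r s) * r s := this
        _ = hp * r s - n := by field_simp
    have hexp : r' s + (n / hp) * ((0 - hp * r' s) / ((n:ℝ) - hp * r s)) - hp
        = (-(r' s * r s) - ((n:ℝ) - hp * r s)) * hp / ((n:ℝ) - hp * r s) := by
      field_simp
      ring
    rw [hexp]
    apply div_nonneg _ hbs.le
    apply mul_nonneg _ hhp.le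
    linarith
  -- monotonicity on Icc Tstar t
  have hsub : Set.Icc Tstar t ⊆ Set.Ico Tstar T := fun x hx =>
    ⟨hx.1, lt_of_le_of_lt hx.2 ht.2⟩
  have hmono : MonotoneOn F (Set.Icc Tstar t) := by
    apply monotoneOn_of_deriv_nonneg (convex_Icc _ _)
    · intro x hx
      exact ((key x (hsub hx)).1.continuousAt).continuousWithinAt
    · intro x hx
      rw [interior_Icc] at hx
      exact ((key x (hsub (Set.Ioo_subset_Icc_self hx))).1).differentiableAt.differentiableWithinAt
    · intro x hx
      rw [interior_Icc] at hx
      have h := key x (hsub (Set.Ioo_subset_Icc_self hx))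
      rw [h.1.deriv]
      exact h.2
  have h0 : Tstar ∈ Set.Icc Tstar t := ⟨le_refl _, ht.1⟩
  have h1 : t ∈ Set.Icc Tstar t := ⟨ht.1, le_refl _⟩
  have := hmono h0 h1 ht.1
  simp only [hF] at this
  linarith
end

section
/- Let h⁻ > 0, n ≥ 1, and suppose r : [T'', ∞) → ℝ is differentiable with r(T'') > n/h⁻ and r'(t) ≥ h⁻ − n/r(t) for all t ≥ T''. Then r is nondecreasing, stays above n/h⁻, satisfies r(t) + (n/h⁻)·log(h⁻·r(t) − n) ≥ h⁻·(t − T'') + r(T'') + (n/h⁻)·log(h⁻·r(T'') − n) for all t ≥ T'', and r(t) → ∞ as t → ∞. -/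
/-!
The forcing speed `hm - n / x` is increasing in `x` and positive at `x = r T''`, so the
solution cannot fall below its initial value: at a first return to the level `r T''` the
derivative would be positive. Hence `r' ≥ hm - n / r T'' > 0` throughout, which gives
monotonicity and at least linear growth. The logarithmic inequality integrates
`d/dt [r + (n/hm) log (hm r - n)] = hm r r' / (hm r - n) ≥ hm`.
-/

open Set Filter

section DerivOnIci

variable {f f' : ℝ → ℝ} {a : ℝ}

lemma monotoneOn_Ici_of_hasDerivAt_nonneg (hf : ∀ t, a ≤ t → HasDerivAt f (f' t) t)
    (hf' : ∀ t, a < t → 0 ≤ f' t) : MonotoneOn f (Ici a) :=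
  monotoneOn_of_hasDerivWithinAt_nonneg (convex_Ici a)
    (fun t ht => (hf t ht).continuousAt.continuousWithinAt)
    (fun t ht => by
      rw [interior_Ici] at ht ⊢
      exact (hf t ht.le).hasDerivWithinAt)
    (fun t ht => hf' t (by rwa [interior_Ici] at ht))

lemma le_of_hasDerivAt_pos_at_initial_level (hf : ∀ t, a ≤ t → HasDerivAt f (f' t) t)
    (hpos : ∀ t, a ≤ t → f t = f a → 0 < f' t) {t : ℝ} (ht : a ≤ t) : f a ≤ f t := by
  have hfence : -f t ≤ -f a :=
    image_le_of_deriv_right_lt_deriv_boundary (f := fun s => -f s) (B := fun _ => -f a)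
      (fun s hs => (hf s hs.1).neg.continuousAt.continuousWithinAt)
      (fun s hs => (hf s hs.1).neg.hasDerivWithinAt) le_rfl
      (fun _ => hasDerivAt_const _ _)
      (fun s hs hs_eq => neg_lt_zero.2 (hpos s hs.1 (neg_inj.1 hs_eq)))
      ⟨ht, le_rfl⟩
  exact neg_le_neg_iff.1 hfence

lemma add_mul_sub_le_of_le_hasDerivAt {d : ℝ} (hf : ∀ t, a ≤ t → HasDerivAt f (f' t) t)
    (hd : ∀ t, a ≤ t → d ≤ f' t) {t : ℝ} (ht : a ≤ t) : f a + d * (t - a) ≤ f t := by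
  have hmono : MonotoneOn (fun s => f s - d * s) (Ici a) :=
    monotoneOn_Ici_of_hasDerivAt_nonneg
      (fun s hs => (hf s hs).sub ((hasDerivAt_id s).const_mul d) |>.congr_deriv (by simp))
      (fun s hs => sub_nonneg.2 (hd s hs.le))
  have hle : f a - d * a ≤ f t - d * t := hmono self_mem_Ici ht ht
  linarith

lemma tendsto_atTop_of_pos_le_hasDerivAt {d : ℝ} (hf : ∀ t, a ≤ t → HasDerivAt f (f' t) t)
    (hd₀ : 0 < d) (hd : ∀ t, a ≤ t → d ≤ f' t) : Tendsto f atTop atTop := by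
  have hlin : Tendsto (fun t => f a + d * (t - a)) atTop atTop :=
    tendsto_atTop_add_const_left _ _
      ((tendsto_atTop_add_const_right _ _ tendsto_id).const_mul_atTop hd₀)
  refine tendsto_atTop_mono' _ ?_ hlin
  filter_upwards [eventually_ge_atTop a] with t ht
  exact add_mul_sub_le_of_le_hasDerivAt hf hd ht

end DerivOnIci

lemma le_add_log_of_forced_expansion {n hm a : ℝ} {r r' : ℝ → ℝ} (hn : 0 ≤ n) (hhm : 0 < hm)
    (hderiv : ∀ t, a ≤ t → HasDerivAt r (r' t) t) (habove : ∀ t, a ≤ t → n < hm * r t)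
    (hge : ∀ t, a ≤ t → hm - n / r t ≤ r' t) {t : ℝ} (ht : a ≤ t) :
    hm * (t - a) + r a + (n / hm) * Real.log (hm * r a - n)
      ≤ r t + (n / hm) * Real.log (hm * r t - n) := by
  have hgap : ∀ s, a ≤ s → 0 < hm * r s - n := fun s hs => sub_pos.2 (habove s hs)
  have hg : ∀ s, a ≤ s → HasDerivAt (fun s => r s + (n / hm) * Real.log (hm * r s - n))
      (hm * r s * r' s / (hm * r s - n)) s := by
    intro s hs
    have hlog := (((hderiv s hs).const_mul hm).sub_const n).log (hgap s hs).ne'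
    refine ((hderiv s hs).add (hlog.const_mul (n / hm))).congr_deriv ?_
    field_simp [(hgap s hs).ne']
    ring
  have hspeed : ∀ s, a ≤ s → hm ≤ hm * r s * r' s / (hm * r s - n) := by
    intro s hs
    have hr : 0 < r s := pos_of_mul_pos_right (hn.trans_lt (habove s hs)) hhm.le
    rw [le_div_iff₀ (hgap s hs)]
    have hrr' : r s * hm - n ≤ r s * r' s := by
      simpa only [mul_sub, mul_div_cancel₀ _ hr.ne'] using
        mul_le_mul_of_nonneg_left (hge s hs) hr.le
    calc hm * (hm * r s - n) = hm * (r s * hm - n) := by ring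
      _ ≤ hm * (r s * r' s) := mul_le_mul_of_nonneg_left hrr' hhm.le
      _ = hm * r s * r' s := by ring
  have := add_mul_sub_le_of_le_hasDerivAt hg hspeed ht
  linarith

theorem stmt10_general (n : ℕ) (hm Tpp : ℝ) (hhm : 0 < hm)
    (r r' : ℝ → ℝ)
    (hinit : n / hm < r Tpp)
    (hderiv : ∀ t, Tpp ≤ t → HasDerivAt r (r' t) t)
    (hge : ∀ t, Tpp ≤ t → hm - n / r t ≤ r' t) :
    MonotoneOn r (Set.Ici Tpp) ∧
    (∀ t, Tpp ≤ t → n / hm < r t) ∧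
    (∀ t, Tpp ≤ t →
      hm * (t - Tpp) + r Tpp + (n / hm) * Real.log (hm * r Tpp - n)
        ≤ r t + (n / hm) * Real.log (hm * r t - n)) ∧
    Filter.Tendsto r Filter.atTop Filter.atTop := by
  have hr₀ : 0 < r Tpp := (div_nonneg n.cast_nonneg hhm.le).trans_lt hinit
  set d := hm - n / r Tpp
  have hd₀ : 0 < d := sub_pos.2 ((div_lt_iff₀ hr₀).2 (by rwa [div_lt_iff₀' hhm] at hinit))
  have hspeed_of_le : ∀ t, Tpp ≤ t → r Tpp ≤ r t → d ≤ r' t := fun t ht hrt =>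
    (sub_le_sub_left (div_le_div_of_nonneg_left n.cast_nonneg hr₀ hrt) hm).trans (hge t ht)
  have hlow : ∀ t, Tpp ≤ t → r Tpp ≤ r t := fun t ht =>
    le_of_hasDerivAt_pos_at_initial_level hderiv
      (fun s hs hs_eq => hd₀.trans_le (hspeed_of_le s hs hs_eq.ge)) ht
  have hspeed : ∀ t, Tpp ≤ t → d ≤ r' t := fun t ht => hspeed_of_le t ht (hlow t ht)
  have habove : ∀ t, Tpp ≤ t → n / hm < r t := fun t ht => hinit.trans_le (hlow t ht)
  refine ⟨monotoneOn_Ici_of_hasDerivAt_nonneg hderiv fun t ht => hd₀.le.trans (hspeed t ht.le),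
    habove, fun t ht => ?_, tendsto_atTop_of_pos_le_hasDerivAt hderiv hd₀ hspeed⟩
  exact le_add_log_of_forced_expansion n.cast_nonneg hhm hderiv
    (fun s hs => (div_lt_iff₀' hhm).1 (habove s hs)) hge ht

/-- Expansion comparison (Lemma 11 / Section 6): if `r(T'') > n/h⁻` and
`r' ≥ h⁻ − n/r` on `[T'', ∞)`, then `r` is nondecreasing, stays above `n/h⁻`,
satisfies the integrated logarithmic inequality, and tends to infinity. -/
theorem stmt10 (n : ℕ) (hn : 1 ≤ n) (hm Tpp : ℝ) (hhm : 0 < hm)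
    (r r' : ℝ → ℝ)
    (hinit : n / hm < r Tpp)
    (hderiv : ∀ t, Tpp ≤ t → HasDerivAt r (r' t) t)
    (hge : ∀ t, Tpp ≤ t → hm - n / r t ≤ r' t) :
    MonotoneOn r (Set.Ici Tpp) ∧
    (∀ t, Tpp ≤ t → n / hm < r t) ∧
    (∀ t, Tpp ≤ t →
      hm * (t - Tpp) + r Tpp + (n / hm) * Real.log (hm * r Tpp - n)
        ≤ r t + (n / hm) * Real.log (hm * r t - n)) ∧
    Filter.Tendsto r Filter.atTop Filter.atTop :=
  stmt10_general n hm Tpp hhm r r' hinit hderiv hge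
end

section
/- Let w : S^n → ℝ be defined by w(z) = Z(z) + Z(−z) where Z : S^n → ℝ is the support function of a compact convex body K ⊂ ℝ^{n+1} containing the origin. If w_max ≤ c₂·w_min for some c₂ ≥ 1, then the outer radius r_out and inner radius r_in of K satisfy r_out ≤ c₃·r_in for a constant c₃ depending only on n and c₂. -/
/-!
The circumradius is at most the diameter, and the diameter is attained as a width. For the
inradius, suppose every width is at least `(d + 1) ρ` in dimension `d`, and cut `K` by the
halfspaces `⟪u, x⟫ ≤ h_K(u) - ρ`. By Helly it suffices that any `d + 1` cuts meet. If some do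
not, separating the image of `K` under `x ↦ (⟪uᵢ, x⟫)ᵢ` from an orthant gives weights `μ ≥ 0` with
`∑ μᵢ (h_K(uᵢ) - ρ) < ∑ μᵢ ⟪uᵢ, x⟫` on `K`; evaluating at a point where `⟪uⱼ, ·⟫` is minimal
gives `μⱼ w(uⱼ) < ρ ∑ μ`, impossible for the largest weight. A point in all the cuts is the
centre of a ball of radius `ρ` inside `K`.
-/

open Metric Set Module Finset
open scoped RealInnerProductSpace

noncomputable section

section Radii

variable {α : Type*} [PseudoMetricSpace α] {K : Set α}

def circumradius (K : Set α) : ℝ :=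
  sInf {R | ∃ c, K ⊆ closedBall c R}

def inradius (K : Set α) : ℝ :=
  sSup {R | ∃ c, closedBall c R ⊆ K}

lemma circumradius_le (hne : K.Nonempty) {c : α} {R : ℝ} (h : K ⊆ closedBall c R) :
    circumradius K ≤ R := by
  refine csInf_le ⟨0, ?_⟩ ⟨c, h⟩
  rintro R' ⟨c', hc'⟩
  obtain ⟨x, hx⟩ := hne
  exact dist_nonneg.trans (mem_closedBall.1 (hc' hx))

lemma le_inradius {V : Type*} [NormedAddCommGroup V] [NormedSpace ℝ V] [Nontrivial V]
    {K : Set V} (hK : Bornology.IsBounded K) {c : V} {R : ℝ} (h : closedBall c R ⊆ K) :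
    R ≤ inradius K := by
  refine le_csSup ⟨diam K, ?_⟩ ⟨c, h⟩
  rintro R' ⟨c', hc'⟩
  rcases lt_or_ge R' 0 with hR' | hR'
  · exact hR'.le.trans diam_nonneg
  · calc R' ≤ 2 * R' := by linarith
      _ = diam (closedBall c' R') := (diam_closedBall_eq c' hR').symm
      _ ≤ diam K := diam_mono hc' hK

end Radii

variable {E : Type*} [NormedAddCommGroup E] [InnerProductSpace ℝ E]

def supportFunction (K : Set E) (z : E) : ℝ := sSup ((fun x => ⟪z, x⟫) '' K)

def width (K : Set E) (z : E) : ℝ := supportFunction K z + supportFunction K (-z)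

section SupportFunction

variable {K : Set E}

lemma inner_le_supportFunction (hK : IsCompact K) {x : E} (hx : x ∈ K) (z : E) :
    ⟪z, x⟫ ≤ supportFunction K z :=
  le_csSup (hK.image (continuous_const.inner continuous_id)).bddAbove (mem_image_of_mem _ hx)

lemma exists_inner_eq_supportFunction (hK : IsCompact K) (hne : K.Nonempty) (z : E) :
    ∃ x ∈ K, ⟪z, x⟫ = supportFunction K z :=
  (hK.image (continuous_const.inner continuous_id)).sSup_mem (hne.image _)

lemma width_nonneg (hK : IsCompact K) (hne : K.Nonempty) (z : E) : 0 ≤ width K z := by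
  obtain ⟨x, hx⟩ := hne
  have := add_le_add (inner_le_supportFunction hK hx z) (inner_le_supportFunction hK hx (-z))
  rwa [inner_neg_left, add_neg_cancel] at this

lemma exists_norm_eq_one_norm_sub_le_width [Nontrivial E] (hK : IsCompact K) {x y : E}
    (hx : x ∈ K) (hy : y ∈ K) : ∃ u : E, ‖u‖ = 1 ∧ ‖x - y‖ ≤ width K u := by
  rcases eq_or_ne x y with rfl | hxy
  · obtain ⟨u, hu⟩ := exists_norm_eq E zero_le_one
    exact ⟨u, hu, by simpa using width_nonneg hK ⟨x, hx⟩ u⟩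
  have hpos : 0 < ‖x - y‖ := norm_pos_iff.2 (sub_ne_zero.2 hxy)
  refine ⟨‖x - y‖⁻¹ • (x - y), by simp [norm_smul, hpos.ne'], ?_⟩
  calc ‖x - y‖ = ⟪‖x - y‖⁻¹ • (x - y), x⟫ + ⟪-(‖x - y‖⁻¹ • (x - y)), y⟫ := by
        rw [inner_neg_left, ← sub_eq_add_neg, ← inner_sub_right, real_inner_smul_left,
          real_inner_self_eq_norm_sq]
        field_simp
    _ ≤ width K (‖x - y‖⁻¹ • (x - y)) :=
        add_le_add (inner_le_supportFunction hK hx _) (inner_le_supportFunction hK hy _)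

lemma exists_norm_eq_one_subset_closedBall_width [Nontrivial E] (hK : IsCompact K)
    (hne : K.Nonempty) : ∃ u : E, ‖u‖ = 1 ∧ ∃ c, K ⊆ closedBall c (width K u) := by
  obtain ⟨⟨x, y⟩, ⟨hx, hy⟩, hmax⟩ :=
    (hK.prod hK).exists_isMaxOn (hne.prod hne) continuous_dist.continuousOn
  obtain ⟨u, hu, hxy⟩ := exists_norm_eq_one_norm_sub_le_width hK hx hy
  refine ⟨u, hu, x, fun z hz => ?_⟩
  calc dist z x ≤ dist x y := by rw [dist_comm]; exact hmax (mk_mem_prod hx hz)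
    _ ≤ width K u := by rwa [dist_eq_norm]

end SupportFunction

lemma exists_nonneg_sum_mul_lt_of_forall_exists_lt {F ι : Type*} [AddCommGroup F] [Module ℝ F]
    [TopologicalSpace F] [Fintype ι] {K : Set F} (hK : IsCompact K) (hKc : Convex ℝ K)
    (f : ι → F →L[ℝ] ℝ) (β : ι → ℝ) (h : ∀ x ∈ K, ∃ i, β i < f i x) :
    ∃ μ : ι → ℝ, 0 ≤ μ ∧ ∀ x ∈ K, ∑ i, μ i * β i < ∑ i, μ i * f i x := by
  classical
  set L : F →L[ℝ] ι → ℝ := ContinuousLinearMap.pi f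
  have hdisj : Disjoint (Iic β) (L '' K) := by
    rw [Set.disjoint_right]
    rintro _ ⟨x, hx, rfl⟩ hle
    obtain ⟨i, hi⟩ := h x hx
    exact (hle i).not_gt hi
  obtain ⟨g, c₁, c₂, hg_le, hc, hg_gt⟩ := geometric_hahn_banach_closed_compact (convex_Iic β)
    isClosed_Iic (hKc.linear_image L.toLinearMap) (hK.image L.continuous) hdisj
  set μ : ι → ℝ := fun i => g (Pi.single i 1)
  have hg : ∀ y, g y = ∑ i, μ i * y i := fun y => by
    conv_lhs => rw [pi_eq_sum_univ' y]
    simp [μ, map_sum, mul_comm]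
  refine ⟨μ, fun i => ?_, fun x hx => ?_⟩
  · -- `β + t • eᵢ ∈ Iic β` for `t ≤ 0`; if `μ i < 0`, some such point has `g = c₁`
    by_contra! hμ
    have hβ := hg_le β self_mem_Iic
    have := hg_le (β + ((c₁ - g β) / μ i) • Pi.single i 1) fun j => by
      rcases eq_or_ne j i with rfl | hji
      · simpa using div_nonpos_of_nonneg_of_nonpos (sub_nonneg.2 hβ.le) hμ.le
      · simp [hji]
    rw [map_add, map_smul, smul_eq_mul, div_mul_cancel₀ _ hμ.ne] at this
    linarith
  · rw [← hg, ← hg]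
    exact (hg_le β self_mem_Iic).trans (hc.trans (hg_gt (L x) (mem_image_of_mem L hx)))

section InnerParallelBody

variable {K : Set E} {ρ : ℝ}

/-- Over all unit `u`, these sets intersect in the inner parallel body of `K` at distance `ρ`. -/
def innerCut (K : Set E) (ρ : ℝ) (u : E) : Set E := K ∩ {x | ⟪u, x⟫ ≤ supportFunction K u - ρ}

lemma mul_width_lt_of_forall_sum_lt {ι : Type*} [Fintype ι] (hK : IsCompact K)
    (hne : K.Nonempty) {u : ι → E} {μ : ι → ℝ} (hμ : 0 ≤ μ)
    (h : ∀ x ∈ K, ∑ i, μ i * (supportFunction K (u i) - ρ) < ∑ i, μ i * ⟪u i, x⟫) (j : ι) :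
    μ j * width K (u j) < ρ * ∑ i, μ i := by
  obtain ⟨x, hx, hxj⟩ := exists_inner_eq_supportFunction hK hne (-u j)
  have hsum := h x hx
  simp only [mul_sub, Finset.sum_sub_distrib, ← Finset.sum_mul] at hsum
  calc μ j * width K (u j) = μ j * (supportFunction K (u j) - ⟪u j, x⟫) := by
        rw [width, ← hxj, inner_neg_left]; ring
    _ ≤ ∑ i, μ i * (supportFunction K (u i) - ⟪u i, x⟫) :=
        Finset.single_le_sum (fun i _ => mul_nonneg (hμ i)
          (sub_nonneg.2 (inner_le_supportFunction hK hx _))) (Finset.mem_univ j)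
    _ < ρ * ∑ i, μ i := by
        simp only [mul_sub, Finset.sum_sub_distrib]
        linarith

lemma nonempty_biInter_innerCut (hK : IsCompact K) (hKc : Convex ℝ K) (hne : K.Nonempty)
    (hρ : 0 ≤ ρ) {d : ℕ} (hw : ∀ u : E, ‖u‖ = 1 → d * ρ ≤ width K u)
    (I : Finset (sphere (0 : E) 1)) (hI : #I ≤ d) : (⋂ u ∈ I, innerCut K ρ u).Nonempty := by
  by_contra hempty
  have hcover : ∀ x ∈ K, ∃ u : I, supportFunction K u - ρ < innerSL ℝ (u : E) x := by
    intro x hx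
    by_contra! hx'
    exact hempty ⟨x, mem_iInter₂.2 fun u hu => ⟨hx, hx' ⟨u, hu⟩⟩⟩
  obtain ⟨μ, hμ, hlt⟩ := exists_nonneg_sum_mul_lt_of_forall_exists_lt hK hKc _ _ hcover
  obtain ⟨x₀, hx₀⟩ := hne
  obtain ⟨i₀, -⟩ := hcover x₀ hx₀
  obtain ⟨j, -, hj⟩ := Finset.univ.exists_max_image μ ⟨i₀, Finset.mem_univ _⟩
  have hwidth := mul_width_lt_of_forall_sum_lt hK ⟨x₀, hx₀⟩ hμ hlt j
  have hsum : ∑ i, μ i ≤ #I * μ j := by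
    simpa using Finset.sum_le_card_nsmul Finset.univ μ (μ j) fun i _ => hj i (Finset.mem_univ i)
  have hj_unit : ‖((j : sphere (0 : E) 1) : E)‖ = 1 := mem_sphere_zero_iff_norm.1 j.1.2
  have hI' : (#I : ℝ) ≤ d := by exact_mod_cast hI
  linarith [mul_le_mul_of_nonneg_left (hw _ hj_unit) (hμ j), mul_le_mul_of_nonneg_left hsum hρ,
    mul_le_mul_of_nonneg_right hI' (mul_nonneg hρ (hμ j))]

lemma closedBall_subset_of_forall_inner_le [CompleteSpace E] (hK : IsCompact K)
    (hKc : Convex ℝ K) (hne : K.Nonempty) {x : E}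
    (hx : ∀ u : E, ‖u‖ = 1 → ⟪u, x⟫ ≤ supportFunction K u - ρ) : closedBall x ρ ⊆ K := by
  intro y hy
  rw [← iInter_halfSpaces_eq hKc hK.isClosed, mem_iInter]
  intro l
  obtain ⟨z, rfl⟩ := (InnerProductSpace.toDual ℝ E).surjective l
  simp only [mem_ofPred_eq, InnerProductSpace.toDual_apply_apply]
  rcases eq_or_ne z 0 with rfl | hz
  · obtain ⟨x', hx'⟩ := hne
    exact ⟨x', hx', by simp⟩
  set u := ‖z‖⁻¹ • z
  have hu : ‖u‖ = 1 := by simp [u, norm_smul, hz]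
  obtain ⟨x', hx', hux'⟩ := exists_inner_eq_supportFunction hK hne u
  refine ⟨x', hx', ?_⟩
  have huy : ⟪u, y⟫ ≤ ⟪u, x'⟫ :=
    calc ⟪u, y⟫ = ⟪u, x⟫ + ⟪u, y - x⟫ := by rw [← inner_add_right, add_sub_cancel]
      _ ≤ (supportFunction K u - ρ) + ‖y - x‖ := by
          gcongr
          · exact hx u hu
          · simpa [hu] using real_inner_le_norm u (y - x)
      _ ≤ ⟪u, x'⟫ := by rw [hux', ← dist_eq_norm]; linarith [mem_closedBall.1 hy]
  have hzu : ∀ v, ⟪z, v⟫ = ‖z‖ * ⟪u, v⟫ := fun v => by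
    rw [real_inner_smul_left, ← mul_assoc, mul_inv_cancel₀ (norm_ne_zero_iff.2 hz), one_mul]
  rw [hzu, hzu]
  exact mul_le_mul_of_nonneg_left huy (norm_nonneg z)

theorem exists_closedBall_subset_of_le_width [FiniteDimensional ℝ E] (hK : IsCompact K)
    (hKc : Convex ℝ K) (hne : K.Nonempty) (hρ : 0 ≤ ρ)
    (hw : ∀ u : E, ‖u‖ = 1 → (finrank ℝ E + 1) * ρ ≤ width K u) :
    ∃ x, closedBall x ρ ⊆ K := by
  have hcut : (⋂ u : sphere (0 : E) 1, innerCut K ρ u).Nonempty :=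
    Convex.helly_theorem_compact' (𝕜 := ℝ)
      (fun u => hKc.inter ((convex_Iic _).linear_preimage (innerₛₗ ℝ (u : E))))
      (fun u => hK.inter_right (isClosed_Iic.preimage (innerSL ℝ (u : E)).continuous))
      (nonempty_biInter_innerCut hK hKc hne hρ (by exact_mod_cast hw))
  obtain ⟨x, hx⟩ := hcut
  exact ⟨x, closedBall_subset_of_forall_inner_le hK hKc hne fun u hu =>
    (mem_iInter.1 hx ⟨u, mem_sphere_zero_iff_norm.2 hu⟩).2⟩

end InnerParallelBody

end

/-- Corollary 1: if the width function `w(z) = Z(z) + Z(−z)` of a compact convex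
body `K ⊂ ℝ^{n+1}` containing the origin satisfies `w_max ≤ c₂·w_min`, then
`r_out ≤ c₃·r_in` for a constant `c₃` depending only on `n` and `c₂`. -/
theorem stmt14 (n : ℕ) (c₂ : ℝ) (hc₂ : 1 ≤ c₂) :
    ∃ c₃ > 0, ∀ (K : Set (EuclideanSpace ℝ (Fin (n + 1))))
      (Z : EuclideanSpace ℝ (Fin (n + 1)) → ℝ) (rin rout : ℝ),
      IsCompact K → Convex ℝ K →
      (0 : EuclideanSpace ℝ (Fin (n + 1))) ∈ K →
      (∀ z, Z z = sSup ((fun x => (inner ℝ z x : ℝ)) '' K)) →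
      rout = sInf {R : ℝ | ∃ c, K ⊆ Metric.closedBall c R} →
      rin = sSup {R : ℝ | ∃ c, Metric.closedBall c R ⊆ K} →
      (∀ z z' : EuclideanSpace ℝ (Fin (n + 1)), ‖z‖ = 1 → ‖z'‖ = 1 →
        Z z + Z (-z) ≤ c₂ * (Z z' + Z (-z'))) →
      rout ≤ c₃ * rin := by
  have hc₂0 : 0 < c₂ := one_pos.trans_le hc₂
  refine ⟨(n + 2) * c₂, by positivity, ?_⟩
  intro K Z rin rout hK hKc h0K hZ hrout hrin hpinch
  obtain rfl : Z = supportFunction K := funext hZ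
  have hpinch' : ∀ z z' : EuclideanSpace ℝ (Fin (n + 1)), ‖z‖ = 1 → ‖z'‖ = 1 →
      width K z ≤ c₂ * width K z' := hpinch
  have hne : K.Nonempty := ⟨0, h0K⟩
  obtain ⟨u, hu, c, hK_ball⟩ := exists_norm_eq_one_subset_closedBall_width hK hne
  set ρ := width K u / ((n + 2) * c₂)
  have hρ : 0 ≤ ρ := div_nonneg (width_nonneg hK hne u) (by positivity)
  have hwu : (n + 2) * c₂ * ρ = width K u := mul_div_cancel₀ _ (by positivity)
  obtain ⟨x, hx⟩ := exists_closedBall_subset_of_le_width hK hKc hne hρ fun z hz => by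
    rw [finrank_euclideanSpace_fin]
    refine le_of_mul_le_mul_left ?_ hc₂0
    push_cast
    linarith [hpinch' u z hu hz]
  calc rout ≤ width K u := hrout ▸ circumradius_le hne hK_ball
    _ = (n + 2) * c₂ * ρ := hwu.symm
    _ ≤ (n + 2) * c₂ * rin := by gcongr; exact hrin ▸ le_inradius hK.isBounded hx
end
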